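/- arXiv:2104.03377 — 3 statements merged into one kernel-verified Lean document; each statement's English description precedes it below -/
import Mathlib

section
/- Let E be an Archimedean vector lattice. Then E is atomless if and only if every prime ideal of E is order dense in E. -/
/-- An (order) ideal of the vector lattice `E`: a solid linear subspace. -/
def IsIdeal {E : Type*} [Lattice E] [AddCommGroup E] [Module ℝ E]
    (I : Submodule ℝ E) : Prop :=
  ∀ x y : E, |x| ≤ |y| → y ∈ I → x ∈ I

/-- A prime ideal: a proper ideal `P` such that `x ⊓ y ∈ P` implies `x ∈ P` or `y ∈ P`. -/
def IsPrimeIdeal {E : Type*} [Lattice E] [AddCommGroup E] [Module ℝ E]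
    (P : Submodule ℝ E) : Prop :=
  IsIdeal P ∧ P ≠ ⊤ ∧ ∀ x y : E, x ⊓ y ∈ P → x ∈ P ∨ y ∈ P

/-- A principal ideal: `I = {y : |y| ≤ c • x for some scalar c ≥ 0}` for some `x ≥ 0`. -/
def IsPrincipalIdeal {E : Type*} [Lattice E] [AddCommGroup E] [Module ℝ E]
    (I : Submodule ℝ E) : Prop :=
  ∃ x : E, 0 ≤ x ∧ ∀ y : E, y ∈ I ↔ ∃ c : ℝ, 0 ≤ c ∧ |y| ≤ c • x

/-- A maximal ideal: a proper ideal `M` such that any ideal between `M` and `E` equals `M` or `E`. -/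
def IsMaximalIdeal {E : Type*} [Lattice E] [AddCommGroup E] [Module ℝ E]
    (M : Submodule ℝ E) : Prop :=
  IsIdeal M ∧ M ≠ ⊤ ∧ ∀ J : Submodule ℝ E, IsIdeal J → M ≤ J → J = M ∨ J = ⊤

/-- An ideal `I` is order dense if its disjoint complement is trivial. -/
def IsOrderDense {E : Type*} [Lattice E] [AddCommGroup E] [Module ℝ E]
    (I : Submodule ℝ E) : Prop :=
  ∀ x : E, (∀ y ∈ I, |x| ⊓ |y| = 0) → x = 0

/-- `a` is an atom of the vector lattice `E`. -/
def IsAtomElem {E : Type*} [Lattice E] [AddCommGroup E] (a : E) : Prop :=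
  0 < a ∧ ∀ x y : E, 0 ≤ x → x ≤ a → 0 ≤ y → y ≤ a → x ⊓ y = 0 → x = 0 ∨ y = 0

/-- The vector lattice `E` is Archimedean. -/
def VLArchimedean (E : Type*) [Lattice E] [AddCommGroup E] : Prop :=
  ∀ x y : E, (∀ n : ℕ, n • x ≤ y) → x ≤ 0

/-- The vector lattice `E` is uniformly complete. -/
def UniformlyComplete (E : Type*) [Lattice E] [AddCommGroup E] [Module ℝ E] : Prop :=
  ∀ e : E, 0 ≤ e → ∀ x : ℕ → E,
    (∀ ε : ℝ, 0 < ε → ∃ N : ℕ, ∀ m n : ℕ, N ≤ m → N ≤ n → |x m - x n| ≤ ε • e) →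
    ∃ l : E, ∀ ε : ℝ, 0 < ε → ∃ N : ℕ, ∀ n : ℕ, N ≤ n → |x n - l| ≤ ε • e

/-- The vector lattice `E` has a strong unit. -/
def HasStrongUnit (E : Type*) [Lattice E] [AddCommGroup E] [Module ℝ E] : Prop :=
  ∃ e : E, 0 ≤ e ∧ ∀ x : E, ∃ c : ℝ, 0 < c ∧ |x| ≤ c • e

/-- The vector lattice `E` is prime Noetherian: every increasing sequence of
prime ideals is eventually constant. -/
def PrimeNoetherian (E : Type*) [Lattice E] [AddCommGroup E] [Module ℝ E] : Prop :=
  ∀ P : ℕ → Submodule ℝ E, (∀ n, IsPrimeIdeal (P n)) → Monotone P →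
    ∃ N : ℕ, ∀ n : ℕ, N ≤ n → P n = P N


section Aux

variable {E : Type*} [Lattice E] [AddCommGroup E] [Module ℝ E]
    [CovariantClass E E (· + ·) (· ≤ ·)] [PosSMulMono ℝ E]

lemma aux_inf_add_le {p q w : E} (hp : 0 ≤ p) (hq : 0 ≤ q) (hw : 0 ≤ w) :
    (p + q) ⊓ w ≤ p ⊓ w + q ⊓ w := by
  have h : p ⊓ w + q ⊓ w = ((p + q) ⊓ (p + w)) ⊓ ((w + q) ⊓ (w + w)) := by
    rw [inf_add, add_inf, add_inf]
  rw [h]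
  refine le_inf (le_inf inf_le_left (inf_le_right.trans (le_add_of_nonneg_left hp)))
    (le_inf (inf_le_right.trans (le_add_of_nonneg_right hq))
      (inf_le_right.trans (le_add_of_nonneg_right hw)))

lemma aux_disj_add {p q w : E} (hp : 0 ≤ p) (hq : 0 ≤ q) (hw : 0 ≤ w)
    (h1 : p ⊓ w = 0) (h2 : q ⊓ w = 0) : (p + q) ⊓ w = 0 := by
  refine le_antisymm ?_ (le_inf (add_nonneg hp hq) hw)
  calc (p + q) ⊓ w ≤ p ⊓ w + q ⊓ w := aux_inf_add_le hp hq hw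
    _ = 0 := by rw [h1, h2, add_zero]

lemma aux_disj_nsmul {p w : E} (hp : 0 ≤ p) (hw : 0 ≤ w) (h : p ⊓ w = 0) :
    ∀ n : ℕ, (n • p) ⊓ w = 0 := by
  intro n
  induction n with
  | zero => rw [zero_smul]; exact inf_eq_left.mpr hw
  | succ n ih =>
      rw [succ_nsmul]
      exact aux_disj_add (nsmul_nonneg hp n) hp hw ih h

lemma aux_abs_eq_zero {x : E} (h : |x| = 0) : x = 0 := by
  have h1 : x ≤ 0 := h ▸ le_abs_self x
  have h2 : 0 ≤ x := neg_nonpos.mp (h ▸ neg_le_abs x)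
  exact le_antisymm h1 h2

lemma aux_smul_sup {c : ℝ} (hc : 0 < c) (x y : E) : c • (x ⊔ y) = c • x ⊔ c • y := by
  have h := (OrderIso.smulRight (β := E) hc).map_sup x y
  simp only [OrderIso.smulRight_apply] at h
  exact h

lemma aux_abs_smul (c : ℝ) (x : E) : |c • x| = |c| • |x| := by
  have key : ∀ d : ℝ, 0 < d → ∀ z : E, |d • z| = d • |z| := by
    intro d hd z
    show d • z ⊔ -(d • z) = d • (z ⊔ -z)
    rw [aux_smul_sup hd, smul_neg]
  rcases lt_trichotomy c 0 with hc | hc | hc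
  · have : c • x = (-c) • (-x) := by rw [neg_smul, smul_neg, neg_neg]
    rw [this, key (-c) (by linarith) (-x), abs_neg, abs_of_neg hc]
  · subst hc; rw [zero_smul, abs_zero, abs_zero, zero_smul]
  · rw [key c hc x, abs_of_pos hc]

lemma aux_abs_inf_abs_le (x y : E) : |x| ⊓ |y| ≤ |x ⊓ y| := by
  letI : DistribLattice E := AddCommGroup.toDistribLattice E
  have h : -x ⊔ -y ≤ |x ⊓ y| := by rw [← neg_inf]; exact neg_le_abs _
  have hx : -x ≤ |x ⊓ y| := le_sup_left.trans h
  have hy : -y ≤ |x ⊓ y| := le_sup_right.trans h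
  have hxy : x ⊓ y ≤ |x ⊓ y| := le_abs_self _
  show (x ⊔ -x) ⊓ (y ⊔ -y) ≤ |x ⊓ y|
  calc (x ⊔ -x) ⊓ (y ⊔ -y) = (x ⊓ (y ⊔ -y)) ⊔ (-x ⊓ (y ⊔ -y)) := inf_sup_right ..
    _ ≤ |x ⊓ y| := by
        refine sup_le ?_ (inf_le_left.trans hx)
        calc x ⊓ (y ⊔ -y) = (x ⊓ y) ⊔ (x ⊓ -y) := inf_sup_left ..
          _ ≤ |x ⊓ y| := sup_le hxy (inf_le_right.trans hy)

end Aux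

theorem statement0 (E : Type*) [Lattice E] [AddCommGroup E] [Module ℝ E]
    [CovariantClass E E (· + ·) (· ≤ ·)] [PosSMulMono ℝ E]
    (harch : VLArchimedean E) :
    (¬ ∃ a : E, IsAtomElem a) ↔
      ∀ P : Submodule ℝ E, IsPrimeIdeal P → IsOrderDense P := by
  constructor
  · -- atomless implies every prime ideal is order dense
    intro hnoatom P hP x hx
    by_contra hx0
    refine hnoatom ⟨|x|, lt_of_le_of_ne (abs_nonneg x) (fun h => hx0 (aux_abs_eq_zero h.symm)),
      fun u v hu hua hv hva huv => ?_⟩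
    have hmem : u ⊓ v ∈ P := by rw [huv]; exact P.zero_mem
    rcases hP.2.2 u v hmem with h | h
    · left
      have h1 : |x| ⊓ |u| = 0 := hx u h
      rw [abs_of_nonneg hu, inf_comm, inf_eq_left.mpr hua] at h1
      exact h1
    · right
      have h1 : |x| ⊓ |v| = 0 := hx v h
      rw [abs_of_nonneg hv, inf_comm, inf_eq_left.mpr hva] at h1
      exact h1
  · -- every prime ideal order dense implies atomless
    intro hdense
    rintro ⟨a, ha, hatom⟩
    have ha0 : (0 : E) ≤ a := ha.le
    set P : Submodule ℝ E :=
      { carrier := {x : E | |x| ⊓ a = 0}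
        add_mem' := by
          intro x y hx hy
          refine le_antisymm ?_ (le_inf (abs_nonneg _) ha0)
          calc |x + y| ⊓ a ≤ (|x| + |y|) ⊓ a := inf_le_inf_right a (abs_add_le x y)
            _ ≤ |x| ⊓ a + |y| ⊓ a := aux_inf_add_le (abs_nonneg x) (abs_nonneg y) ha0
            _ = 0 := by rw [Set.mem_setOf_eq.mp hx, Set.mem_setOf_eq.mp hy, add_zero]
        zero_mem' := by
          show |(0 : E)| ⊓ a = 0
          rw [abs_zero]; exact inf_eq_left.mpr ha0
        smul_mem' := by
          intro c x hx
          show |c • x| ⊓ a = 0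
          rw [aux_abs_smul]
          refine le_antisymm ?_ (le_inf (smul_nonneg (abs_nonneg c) (abs_nonneg x)) ha0)
          have h1 : |c| • |x| ≤ (⌈|c|⌉₊ : ℕ) • |x| := by
            rw [← Nat.cast_smul_eq_nsmul ℝ]
            have h2 : (0 : E) ≤ ((⌈|c|⌉₊ : ℝ) - |c|) • |x| :=
              smul_nonneg (sub_nonneg.mpr (Nat.le_ceil _)) (abs_nonneg x)
            rw [sub_smul, sub_nonneg] at h2
            exact h2
          calc |c| • |x| ⊓ a ≤ ((⌈|c|⌉₊ : ℕ) • |x|) ⊓ a := inf_le_inf_right a h1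
            _ = 0 := aux_disj_nsmul (abs_nonneg x) ha0 (Set.mem_setOf_eq.mp hx) _ } with hPdef
    have hmemP : ∀ z : E, z ∈ P ↔ |z| ⊓ a = 0 := fun z => Iff.rfl
    have hprime : IsPrimeIdeal P := by
      refine ⟨fun x y hxy hy => ?_, fun htop => ?_, fun x y hxy => ?_⟩
      · rw [hmemP] at hy ⊢
        exact le_antisymm ((inf_le_inf_right a hxy).trans hy.le) (le_inf (abs_nonneg _) ha0)
      · have haP : a ∈ P := htop ▸ Submodule.mem_top
        rw [hmemP, abs_of_nonneg ha0, inf_idem] at haP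
        exact ha.ne' haP
      · by_contra hcon
        push_neg at hcon
        obtain ⟨hx, hy⟩ := hcon
        rw [hmemP] at hx hy hxy
        have hu0 : (0 : E) ≤ |x| ⊓ a := le_inf (abs_nonneg _) ha0
        have hv0 : (0 : E) ≤ |y| ⊓ a := le_inf (abs_nonneg _) ha0
        have huv : (|x| ⊓ a) ⊓ (|y| ⊓ a) = 0 := by
          rw [inf_inf_inf_comm, inf_idem]
          refine le_antisymm ?_ (le_inf (le_inf (abs_nonneg _) (abs_nonneg _)) ha0)
          calc (|x| ⊓ |y|) ⊓ a ≤ |x ⊓ y| ⊓ a := inf_le_inf_right a (aux_abs_inf_abs_le x y)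
            _ = 0 := hxy
        rcases hatom (|x| ⊓ a) (|y| ⊓ a) hu0 inf_le_right hv0 inf_le_right huv with h | h
        · exact hx h
        · exact hy h
    have hzero : a = 0 := by
      refine hdense P hprime a (fun y hy => ?_)
      rw [hmemP] at hy
      rw [abs_of_nonneg ha0, inf_comm]
      exact hy
    exact ha.ne' hzero
end

section
/- Let E be an Archimedean vector lattice. Then no prime ideal of E is order dense in E if and only if every element of E is a finite linear combination of atoms of E. -/
set_option linter.unusedSectionVars false
section VLHelpers
variable {E : Type*} [Lattice E] [AddCommGroup E] [Module ℝ E]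
variable [CovariantClass E E (· + ·) (· ≤ ·)] [PosSMulMono ℝ E]

lemma vl_abs_eq_zero {a : E} (h : |a| = 0) : a = 0 := by
  have h1 : a ≤ 0 := (le_abs_self a).trans h.le
  have h2 : -a ≤ 0 := ((le_abs_self (-a)).trans_eq (abs_neg a)).trans h.le
  exact le_antisymm h1 (by simpa using h2)

lemma vl_smul_scalar_mono {c d : ℝ} {a : E} (hcd : c ≤ d) (ha : 0 ≤ a) :
    c • a ≤ d • a := by
  have h : (0:E) ≤ (d - c) • a := smul_nonneg (by linarith) ha
  rw [sub_smul] at h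
  exact sub_nonneg.mp h

lemma vl_smul_inf {c : ℝ} (hc : 0 < c) (x y : E) : c • (x ⊓ y) = (c • x) ⊓ (c • y) := by
  apply le_antisymm
  · exact le_inf (smul_le_smul_of_nonneg_left inf_le_left hc.le)
      (smul_le_smul_of_nonneg_left inf_le_right hc.le)
  · have h : c⁻¹ • ((c • x) ⊓ (c • y)) ≤ x ⊓ y := by
      apply le_inf
      · have h2 := smul_le_smul_of_nonneg_left
          (inf_le_left : (c • x) ⊓ (c • y) ≤ c • x) (inv_nonneg.mpr hc.le)
        rwa [smul_smul, inv_mul_cancel₀ hc.ne', one_smul] at h2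
      · have h2 := smul_le_smul_of_nonneg_left
          (inf_le_right : (c • x) ⊓ (c • y) ≤ c • y) (inv_nonneg.mpr hc.le)
        rwa [smul_smul, inv_mul_cancel₀ hc.ne', one_smul] at h2
    have h2 := smul_le_smul_of_nonneg_left h hc.le
    rwa [smul_smul, mul_inv_cancel₀ hc.ne', one_smul] at h2

lemma vl_arch_aux (harch : VLArchimedean E) {z a : E} (ha : 0 ≤ a)
    (h : ∀ n : ℕ, 1 ≤ n → z ≤ ((n : ℝ))⁻¹ • a) : z ≤ 0 := by
  apply harch z a
  intro n
  cases n with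
  | zero => simpa using ha
  | succ m =>
    have h1 : z ≤ ((m + 1 : ℕ) : ℝ)⁻¹ • a := h (m + 1) (by omega)
    have hpos : (0:ℝ) < ((m + 1 : ℕ) : ℝ) := by positivity
    have h2 := smul_le_smul_of_nonneg_left h1 hpos.le
    rw [smul_smul, mul_inv_cancel₀ hpos.ne', one_smul] at h2
    rwa [Nat.cast_smul_eq_nsmul] at h2

lemma vl_atom_dichotomy {a x : E} (ha : IsAtomElem a) {t : ℝ} (ht0 : 0 ≤ t) (ht1 : t ≤ 1)
    (hx0 : 0 ≤ x) (hxa : x ≤ a) : t • a ≤ x ∨ x ≤ t • a := by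
  have ha0 : (0:E) ≤ a := ha.1.le
  set u := x - t • a with hu
  have hta0 : (0:E) ≤ t • a := smul_nonneg ht0 ha0
  have htaa : t • a ≤ a := by
    have := vl_smul_scalar_mono ht1 ha0
    rwa [one_smul] at this
  have hp0 : 0 ≤ u⁺ := posPart_nonneg u
  have hpa : u⁺ ≤ a := by
    rw [posPart_def]
    refine sup_le ?_ ha0
    rw [hu, sub_le_iff_le_add]
    exact hxa.trans (le_add_of_nonneg_right hta0)
  have hn0 : 0 ≤ u⁻ := negPart_nonneg u
  have hna : u⁻ ≤ a := by
    rw [negPart_def]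
    refine sup_le ?_ ha0
    rw [hu, neg_sub]
    calc t • a - x ≤ t • a - 0 := sub_le_sub le_rfl hx0
    _ = t • a := sub_zero _
    _ ≤ a := htaa
  rcases ha.2 _ _ hp0 hpa hn0 hna (posPart_inf_negPart_eq_zero u) with h | h
  · right; rw [posPart_eq_zero] at h; rwa [hu, sub_nonpos] at h
  · left; rw [negPart_eq_zero] at h; rwa [hu, sub_nonneg] at h

lemma vl_atom_scalar (harch : VLArchimedean E) {a x : E} (ha : IsAtomElem a)
    (hx0 : 0 ≤ x) (hxa : x ≤ a) : ∃ t : ℝ, 0 ≤ t ∧ t ≤ 1 ∧ x = t • a := by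
  have ha0 : (0:E) ≤ a := ha.1.le
  set S : Set ℝ := {t | 0 ≤ t ∧ t ≤ 1 ∧ t • a ≤ x} with hS
  have h0S : (0:ℝ) ∈ S := ⟨le_rfl, zero_le_one, by simpa using hx0⟩
  have hne : S.Nonempty := ⟨0, h0S⟩
  have hbdd : BddAbove S := ⟨1, fun t ht => ht.2.1⟩
  set s := sSup S with hs
  have hs0 : 0 ≤ s := le_csSup hbdd h0S
  have hs1 : s ≤ 1 := csSup_le hne (fun t ht => ht.2.1)
  have key1 : s • a ≤ x := by
    rw [← sub_nonpos]
    apply vl_arch_aux harch ha0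
    intro n hn
    have hnpos : (0:ℝ) < (n:ℝ) := by exact_mod_cast Nat.pos_of_ne_zero (by omega)
    have hn' : (0:ℝ) < (n:ℝ)⁻¹ := by positivity
    obtain ⟨t, htS, hts⟩ := exists_lt_of_lt_csSup hne (show s - (n:ℝ)⁻¹ < s by linarith)
    calc s • a - x ≤ s • a - t • a := sub_le_sub le_rfl htS.2.2
    _ = (s - t) • a := (sub_smul s t a).symm
    _ ≤ (n:ℝ)⁻¹ • a := vl_smul_scalar_mono (by linarith) ha0
  have key2 : x ≤ s • a := by
    rw [← sub_nonpos]
    apply vl_arch_aux harch ha0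
    intro n hn
    have hnpos : (0:ℝ) < (n:ℝ) := by exact_mod_cast Nat.pos_of_ne_zero (by omega)
    have hn' : (0:ℝ) < (n:ℝ)⁻¹ := by positivity
    by_cases hcase : s + (n:ℝ)⁻¹ ≤ 1
    · have ht0' : (0:ℝ) ≤ s + (n:ℝ)⁻¹ := by linarith
      have htS : s + (n:ℝ)⁻¹ ∉ S := by
        intro hmem
        have := le_csSup hbdd hmem
        linarith
      have hxt : x ≤ (s + (n:ℝ)⁻¹) • a := by
        rcases vl_atom_dichotomy ha ht0' hcase hx0 hxa with h | h
        · exact absurd ⟨ht0', hcase, h⟩ htS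
        · exact h
      calc x - s • a ≤ (s + (n:ℝ)⁻¹) • a - s • a := sub_le_sub hxt le_rfl
      _ = (n:ℝ)⁻¹ • a := by rw [← sub_smul]; congr 1; ring
    · push_neg at hcase
      calc x - s • a ≤ a - s • a := sub_le_sub hxa le_rfl
      _ = (1 - s) • a := by rw [sub_smul, one_smul]
      _ ≤ (n:ℝ)⁻¹ • a := vl_smul_scalar_mono (by linarith) ha0
  exact ⟨s, hs0, hs1, le_antisymm key2 key1⟩

lemma vl_sum_nonneg {ι : Type*} {s : Finset ι} {f : ι → E} (h : ∀ i ∈ s, 0 ≤ f i) :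
    (0:E) ≤ ∑ i ∈ s, f i := by
  induction s using Finset.cons_induction with
  | empty => simp
  | cons i s hi ih =>
    rw [Finset.sum_cons]
    exact add_nonneg (h i (Finset.mem_cons_self i s))
      (ih fun j hj => h j (Finset.mem_cons_of_mem hj))

lemma vl_riesz {x y z : E} (hx : 0 ≤ x) (hy : 0 ≤ y) (hz : 0 ≤ z) (h : x ≤ y + z) :
    ∃ x₁ x₂ : E, 0 ≤ x₁ ∧ x₁ ≤ y ∧ 0 ≤ x₂ ∧ x₂ ≤ z ∧ x = x₁ + x₂ := by
  refine ⟨x ⊓ y, x - x ⊓ y, le_inf hx hy, inf_le_right, ?_, ?_, by abel⟩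
  · rw [sub_nonneg]; exact inf_le_left
  · have heq : x - x ⊓ y = 0 ⊔ (x - y) := by
      rw [sub_eq_add_neg, neg_inf, add_sup, add_neg_cancel, ← sub_eq_add_neg]
    rw [heq]
    refine sup_le hz ?_
    rw [sub_le_iff_le_add, add_comm]
    exact h

lemma vl_le_sum_mem_span (harch : VLArchimedean E) (s : Finset E) :
    ∀ (c : E → ℝ) (x : E), (∀ a ∈ s, IsAtomElem a) → (∀ a ∈ s, 0 ≤ c a) →
    0 ≤ x → x ≤ ∑ a ∈ s, c a • a → x ∈ Submodule.span ℝ {a : E | IsAtomElem a} := by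
  induction s using Finset.cons_induction with
  | empty =>
    intro c x _ _ hx0 hxle
    simp only [Finset.sum_empty] at hxle
    have : x = 0 := le_antisymm hxle hx0
    rw [this]; exact Submodule.zero_mem _
  | cons a s' hnotmem ih =>
    intro c x hatoms hc hx0 hxle
    rw [Finset.sum_cons] at hxle
    have hatom : IsAtomElem a := hatoms a (Finset.mem_cons_self a s')
    have hca : 0 ≤ c a := hc a (Finset.mem_cons_self a s')
    have hsum0 : (0:E) ≤ ∑ b ∈ s', c b • b := by
      refine vl_sum_nonneg fun b hb => ?_
      exact smul_nonneg (hc b (Finset.mem_cons_of_mem hb))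
        (hatoms b (Finset.mem_cons_of_mem hb)).1.le
    obtain ⟨x₁, x₂, h10, h1le, h20, h2le, hxeq⟩ :=
      vl_riesz hx0 (smul_nonneg hca hatom.1.le) hsum0 hxle
    have hx2 : x₂ ∈ Submodule.span ℝ {a : E | IsAtomElem a} :=
      ih c x₂ (fun b hb => hatoms b (Finset.mem_cons_of_mem hb))
        (fun b hb => hc b (Finset.mem_cons_of_mem hb)) h20 h2le
    have hx1 : x₁ ∈ Submodule.span ℝ {a : E | IsAtomElem a} := by
      rcases hca.eq_or_lt with heq | hpos
    -- heq : 0 = c a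
      · have hx1z : x₁ = 0 := le_antisymm (by rw [← heq, zero_smul] at h1le; exact h1le) h10
        rw [hx1z]; exact Submodule.zero_mem _
      · have hinv : (c a)⁻¹ • x₁ ≤ a := by
          have h2 := smul_le_smul_of_nonneg_left h1le (inv_nonneg.mpr hca)
          rwa [smul_smul, inv_mul_cancel₀ hpos.ne', one_smul] at h2
        have hinv0 : (0:E) ≤ (c a)⁻¹ • x₁ := smul_nonneg (inv_nonneg.mpr hca) h10
        obtain ⟨t, _, _, ht⟩ := vl_atom_scalar harch hatom hinv0 hinv
        have hx1eq : x₁ = (c a * t) • a := by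
          have : x₁ = c a • ((c a)⁻¹ • x₁) := by
            rw [smul_smul, mul_inv_cancel₀ hpos.ne', one_smul]
          rw [this, ht, smul_smul]
        rw [hx1eq]
        exact Submodule.smul_mem _ _ (Submodule.subset_span hatom)
    rw [hxeq]; exact Submodule.add_mem _ hx1 hx2

lemma vl_abs_sum_le {ι : Type*} (s : Finset ι) (f : ι → E) :
    |∑ i ∈ s, f i| ≤ ∑ i ∈ s, |f i| := by
  induction s using Finset.cons_induction with
  | empty => simp
  | cons i s hi ih =>
    rw [Finset.sum_cons, Finset.sum_cons]
    exact (abs_add_le _ _).trans (add_le_add_right ih _)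

lemma vl_abs_smul_nonneg (c : ℝ) {a : E} (ha : 0 ≤ a) : |c • a| = |c| • a := by
  rcases le_or_gt 0 c with hc | hc
  · rw [abs_of_nonneg (smul_nonneg hc ha), abs_of_nonneg hc]
  · have h1 : c • a = -((-c) • a) := by rw [neg_smul, neg_neg]
    rw [h1, abs_neg, abs_of_nonneg (smul_nonneg (by linarith) ha), abs_of_neg hc]

lemma vl_abs_smul_le (r : ℝ) (z : E) : |r • z| ≤ |r| • |z| := by
  have h : r • z = r • z⁺ - r • z⁻ := by rw [← smul_sub, posPart_sub_negPart]
  calc |r • z| = |r • z⁺ + -(r • z⁻)| := by rw [h, sub_eq_add_neg]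
  _ ≤ |r • z⁺| + |(-(r • z⁻))| := abs_add_le _ _
  _ = |r| • z⁺ + |r| • z⁻ := by
      rw [abs_neg, vl_abs_smul_nonneg r (posPart_nonneg z), vl_abs_smul_nonneg r (negPart_nonneg z)]
  _ = |r| • |z| := by rw [← smul_add, posPart_add_negPart]

lemma vl_span_atoms_solid (harch : VLArchimedean E) {x y : E} (hxy : |x| ≤ |y|)
    (hy : y ∈ Submodule.span ℝ {a : E | IsAtomElem a}) :
    x ∈ Submodule.span ℝ {a : E | IsAtomElem a} := by
  obtain ⟨c, hsupp, hsum⟩ := Submodule.mem_span_set.mp hy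
  have hatoms : ∀ a ∈ c.support, IsAtomElem a := fun a ha => hsupp ha
  have habs : |y| ≤ ∑ a ∈ c.support, |c a| • a := by
    calc |y| = |∑ a ∈ c.support, c a • a| := by rw [← hsum]; rfl
    _ ≤ ∑ a ∈ c.support, |c a • a| := vl_abs_sum_le _ _
    _ = ∑ a ∈ c.support, |c a| • a :=
        Finset.sum_congr rfl (fun a ha => vl_abs_smul_nonneg _ (hatoms a ha).1.le)
  have hxp : x⁺ ≤ |x| := by
    rw [← posPart_add_negPart x]; exact le_add_of_nonneg_right (negPart_nonneg x)
  have hxn : x⁻ ≤ |x| := by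
    rw [← posPart_add_negPart x]; exact le_add_of_nonneg_left (posPart_nonneg x)
  have hp : x⁺ ∈ Submodule.span ℝ {a : E | IsAtomElem a} :=
    vl_le_sum_mem_span harch c.support (fun a => |c a|) x⁺ hatoms
      (fun a _ => abs_nonneg _) (posPart_nonneg x) ((hxp.trans hxy).trans habs)
  have hn : x⁻ ∈ Submodule.span ℝ {a : E | IsAtomElem a} :=
    vl_le_sum_mem_span harch c.support (fun a => |c a|) x⁻ hatoms
      (fun a _ => abs_nonneg _) (negPart_nonneg x) ((hxn.trans hxy).trans habs)
  rw [← posPart_sub_negPart x]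
  exact Submodule.sub_mem _ hp hn

lemma vl_isIdeal_span (harch : VLArchimedean E) :
    IsIdeal (Submodule.span ℝ {a : E | IsAtomElem a}) :=
  fun _ _ hxy hy => vl_span_atoms_solid harch hxy hy

/-- The ideal generated by an ideal `I` and an element `w`. -/
def vlIdealSup (I : Submodule ℝ E) (w : E) : Submodule ℝ E where
  carrier := {z | ∃ p, p ∈ I ∧ 0 ≤ p ∧ ∃ c : ℝ, 0 ≤ c ∧ |z| ≤ p + c • w}
  zero_mem' := ⟨0, I.zero_mem, le_rfl, 0, le_rfl, by simp⟩
  add_mem' := by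
    rintro z z' ⟨p, hpI, hp0, c, hc0, hz⟩ ⟨q, hqI, hq0, d, hd0, hz'⟩
    refine ⟨p + q, I.add_mem hpI hqI, add_nonneg hp0 hq0, c + d, by linarith, ?_⟩
    calc |z + z'| ≤ |z| + |z'| := abs_add_le _ _
    _ ≤ (p + c • w) + (q + d • w) := add_le_add hz hz'
    _ = (p + q) + (c + d) • w := by rw [add_smul]; abel
  smul_mem' := by
    rintro r z ⟨p, hpI, hp0, c, hc0, hz⟩
    refine ⟨|r| • p, I.smul_mem _ hpI, smul_nonneg (abs_nonneg r) hp0, |r| * c,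
      mul_nonneg (abs_nonneg r) hc0, ?_⟩
    calc |r • z| ≤ |r| • |z| := vl_abs_smul_le r z
    _ ≤ |r| • (p + c • w) := smul_le_smul_of_nonneg_left hz (abs_nonneg r)
    _ = |r| • p + (|r| * c) • w := by rw [smul_add, smul_smul]

lemma vl_le_vlIdealSup {I : Submodule ℝ E} (hI : IsIdeal I) (w : E) : I ≤ vlIdealSup I w :=
  fun z hz => ⟨|z|, hI |z| z (by rw [abs_abs]) hz, abs_nonneg z, 0, le_rfl, by simp⟩

lemma vl_mem_vlIdealSup {I : Submodule ℝ E} {w : E} (hw : 0 ≤ w) : w ∈ vlIdealSup I w :=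
  ⟨0, I.zero_mem, le_rfl, 1, zero_le_one, by simp [abs_of_nonneg hw]⟩

lemma vl_isIdeal_vlIdealSup (I : Submodule ℝ E) (w : E) : IsIdeal (vlIdealSup I w) := by
  rintro x y hxy ⟨p, hpI, hp0, c, hc0, hy⟩
  exact ⟨p, hpI, hp0, c, hc0, hxy.trans hy⟩

lemma vl_smul_disjoint {x y : E} (hx : 0 ≤ x) (hy : 0 ≤ y) (hxy : x ⊓ y = 0)
    {c d : ℝ} (hc : 0 ≤ c) (hd : 0 ≤ d) : (c • x) ⊓ (d • y) = 0 := by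
  have hm0 : (0:ℝ) ≤ max c d := le_trans hc (le_max_left c d)
  apply le_antisymm
  · rcases hm0.eq_or_lt with heq | hm
    · have hc0 : c = 0 := le_antisymm (by rw [heq]; exact le_max_left c d) hc
      have hd0 : d = 0 := le_antisymm (by rw [heq]; exact le_max_right c d) hd
      simp [hc0, hd0]
    · calc (c • x) ⊓ (d • y)
          ≤ (max c d • x) ⊓ (max c d • y) :=
            inf_le_inf (vl_smul_scalar_mono (le_max_left c d) hx)
              (vl_smul_scalar_mono (le_max_right c d) hy)
        _ = max c d • (x ⊓ y) := (vl_smul_inf hm x y).symm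
        _ = 0 := by rw [hxy, smul_zero]
  · exact le_inf (smul_nonneg hc hx) (smul_nonneg hd hy)

end VLHelpers

theorem statement1 (E : Type*) [Lattice E] [AddCommGroup E] [Module ℝ E]
    [CovariantClass E E (· + ·) (· ≤ ·)] [PosSMulMono ℝ E]
    (harch : VLArchimedean E) :
    (∀ P : Submodule ℝ E, IsPrimeIdeal P → ¬ IsOrderDense P) ↔
      ∀ x : E, x ∈ Submodule.span ℝ {a : E | IsAtomElem a} := by
  constructor
  · intro h x
    by_contra hxA
    have huA : |x| ∉ Submodule.span ℝ {a : E | IsAtomElem a} := fun habs =>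
      hxA (vl_span_atoms_solid harch (by rw [abs_abs]) habs)
    set u := |x| with hu
    have hu0 : (0:E) ≤ u := abs_nonneg x
    set A := Submodule.span ℝ {a : E | IsAtomElem a} with hA
    set 𝒮 : Set (Submodule ℝ E) := {I | IsIdeal I ∧ A ≤ I ∧ u ∉ I} with h𝒮
    have hA𝒮 : A ∈ 𝒮 := ⟨vl_isIdeal_span harch, le_rfl, huA⟩
    obtain ⟨P, hAP, hPmem, hPmax⟩ := zorn_le_nonempty₀ 𝒮 (by
      intro c hc𝒮 hchain y hyc
      refine ⟨{ carrier := {z | ∃ I ∈ c, z ∈ I}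
                zero_mem' := ⟨y, hyc, Submodule.zero_mem y⟩
                add_mem' := ?_
                smul_mem' := ?_ }, ⟨?_, ?_, ?_⟩, ?_⟩
      · rintro z z' ⟨I, hIc, hzI⟩ ⟨J, hJc, hz'J⟩
        rcases hchain.total hIc hJc with hIJ | hJI
        · exact ⟨J, hJc, J.add_mem (hIJ hzI) hz'J⟩
        · exact ⟨I, hIc, I.add_mem hzI (hJI hz'J)⟩
      · rintro r z ⟨I, hIc, hzI⟩
        exact ⟨I, hIc, I.smul_mem r hzI⟩
      · rintro z z' hzz' ⟨I, hIc, hz'I⟩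
        exact ⟨I, hIc, (hc𝒮 hIc).1 z z' hzz' hz'I⟩
      · intro z hz
        exact ⟨y, hyc, (hc𝒮 hyc).2.1 hz⟩
      · rintro ⟨I, hIc, huI⟩
        exact (hc𝒮 hIc).2.2 huI
      · intro I hIc z hzI
        exact ⟨I, hIc, hzI⟩) A hA𝒮
    obtain ⟨hPideal, hAleP, huP⟩ := hPmem
    have hPne : P ≠ ⊤ := fun hcon => huP (hcon ▸ Submodule.mem_top)
    -- P is prime
    have hkey : ∀ v w : E, 0 ≤ v → 0 ≤ w → v ⊓ w = 0 → v ∈ P ∨ w ∈ P := by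
      intro v w hv hw hvw
      by_contra hcon
      push_neg at hcon
      obtain ⟨hvP, hwP⟩ := hcon
      have hgen : ∀ (v' : E), 0 ≤ v' → v' ∉ P → u ∈ vlIdealSup P v' := by
        intro v' hv'0 hv'P
        by_contra huv
        have hmem : vlIdealSup P v' ∈ 𝒮 :=
          ⟨vl_isIdeal_vlIdealSup P v', hAleP.trans (vl_le_vlIdealSup hPideal v'), huv⟩
        have hle : P ≤ vlIdealSup P v' := vl_le_vlIdealSup hPideal v'
        exact hv'P (hPmax hmem hle (vl_mem_vlIdealSup hv'0))
      obtain ⟨p, hpP, hp0, cc, hc0, hup⟩ := hgen v hv hvP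
      obtain ⟨q, hqP, hq0, dd, hd0, huq⟩ := hgen w hw hwP
      have h1 : |u| ≤ (p + q) + cc • v := by
        calc |u| ≤ p + cc • v := hup
        _ ≤ (p + q) + cc • v := add_le_add_left (le_add_of_nonneg_right hq0) _
      have h2 : |u| ≤ (p + q) + dd • w := by
        calc |u| ≤ q + dd • w := huq
        _ ≤ (p + q) + dd • w := add_le_add_left (le_add_of_nonneg_left hp0) _
      have h3 := le_inf h1 h2
      rw [← add_inf, vl_smul_disjoint hv hw hvw hc0 hd0, add_zero] at h3
      have : u ∈ P := hPideal u (p + q)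
        (by rw [abs_of_nonneg (add_nonneg hp0 hq0)]; exact h3) (P.add_mem hpP hqP)
      exact huP this
    have hprime : ∀ v w : E, v ⊓ w ∈ P → v ∈ P ∨ w ∈ P := by
      intro v w hvw
      have h1 : (0:E) ≤ v - v ⊓ w := sub_nonneg.mpr inf_le_left
      have h2 : (0:E) ≤ w - v ⊓ w := sub_nonneg.mpr inf_le_right
      have h3 : (v - v ⊓ w) ⊓ (w - v ⊓ w) = 0 := by rw [← inf_sub]; simp
      rcases hkey _ _ h1 h2 h3 with hmem | hmem
      · left
        have := P.add_mem hmem hvw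
        simpa using this
      · right
        have := P.add_mem hmem hvw
        simpa using this
    -- P is order dense
    have hdense : IsOrderDense P := by
      intro z hz
      by_contra hz0
      have hz0' : (0:E) < |z| :=
        lt_of_le_of_ne (abs_nonneg z) (fun hcon => hz0 (vl_abs_eq_zero hcon.symm))
      have hatom : IsAtomElem |z| := by
        refine ⟨hz0', fun v w hv0 hvz hw0 hwz hvw => ?_⟩
        rcases hprime v w (by rw [hvw]; exact P.zero_mem) with hmem | hmem
        · left
          have h4 : |z| ⊓ |v| = 0 := hz v hmem
          have h5 : v ≤ |z| ⊓ |v| := le_inf hvz (le_of_eq (abs_of_nonneg hv0).symm)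
          exact le_antisymm (h5.trans h4.le) hv0
        · right
          have h4 : |z| ⊓ |w| = 0 := hz w hmem
          have h5 : w ≤ |z| ⊓ |w| := le_inf hwz (le_of_eq (abs_of_nonneg hw0).symm)
          exact le_antisymm (h5.trans h4.le) hw0
      have hzP : |z| ∈ P := hAleP (Submodule.subset_span hatom)
      have h6 := hz |z| hzP
      rw [abs_abs, inf_idem] at h6
      exact hz0 (vl_abs_eq_zero h6)
    exact h P ⟨hPideal, hPne, hprime⟩ hdense
  · intro hspan P hP hdense
    obtain ⟨hPideal, hPne, hPprime⟩ := hP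
    have hex : ∃ z : E, z ∉ P := by
      by_contra hall; push_neg at hall
      exact hPne (Submodule.eq_top_iff'.mpr hall)
    obtain ⟨z, hzP⟩ := hex
    have hatomnot : ∃ a, IsAtomElem a ∧ a ∉ P := by
      by_contra hall; push_neg at hall
      exact hzP (Submodule.span_le.mpr (fun a ha => hall a ha) (hspan z))
    obtain ⟨a, hatom, haP⟩ := hatomnot
    have ha0 : a ≠ 0 := ne_of_gt hatom.1
    refine ha0 (hdense a (fun y hy => ?_))
    rw [abs_of_nonneg hatom.1.le]
    have hw0 : (0:E) ≤ a ⊓ |y| := le_inf hatom.1.le (abs_nonneg y)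
    have hwa : a ⊓ |y| ≤ a := inf_le_left
    obtain ⟨t, ht0, ht1, htw⟩ := vl_atom_scalar harch hatom hw0 hwa
    have hwP : a ⊓ |y| ∈ P :=
      hPideal (a ⊓ |y|) y (by rw [abs_of_nonneg hw0]; exact inf_le_right) hy
    rcases ht0.eq_or_lt with heq | hpos
    · rw [htw, ← heq, zero_smul]
    · exfalso
      apply haP
      have haeq : a = t⁻¹ • (a ⊓ |y|) := by
        rw [htw, smul_smul, inv_mul_cancel₀ hpos.ne', one_smul]
      rw [haeq]
      exact P.smul_mem _ hwP
end

section
/- Let E be a vector lattice (not necessarily Archimedean). If every prime ideal of E is principal, then every proper ideal of E is principal. -/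
set_option linter.unusedSectionVars false


section Helpers
variable {E : Type*} [Lattice E] [AddCommGroup E] [Module ℝ E]
  [CovariantClass E E (· + ·) (· ≤ ·)] [PosSMulMono ℝ E]

lemma my_smul_mono_scalar {c d : ℝ} {x : E} (h : c ≤ d) (hx : 0 ≤ x) : c • x ≤ d • x := by
  have h1 : (0:E) ≤ (d - c) • x := smul_nonneg (sub_nonneg.2 h) hx
  rw [sub_smul] at h1
  exact sub_nonneg.1 h1

lemma my_smul_inf {c : ℝ} (hc : 0 ≤ c) (x y : E) : c • (x ⊓ y) = c • x ⊓ c • y := by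
  rcases eq_or_lt_of_le hc with h0 | hpos
  · simp [← h0]
  refine le_antisymm (le_inf (smul_le_smul_of_nonneg_left inf_le_left hc)
      (smul_le_smul_of_nonneg_left inf_le_right hc)) ?_
  have h1 : c⁻¹ • (c • x ⊓ c • y) ≤ x ⊓ y := by
    refine le_inf ?_ ?_
    · have h2 := smul_le_smul_of_nonneg_left (inf_le_left (a := c • x) (b := c • y))
        (inv_nonneg.2 hc)
      rwa [inv_smul_smul₀ (ne_of_gt hpos)] at h2
    · have h2 := smul_le_smul_of_nonneg_left (inf_le_right (a := c • x) (b := c • y))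
        (inv_nonneg.2 hc)
      rwa [inv_smul_smul₀ (ne_of_gt hpos)] at h2
  have h2 := smul_le_smul_of_nonneg_left h1 hc
  rwa [smul_inv_smul₀ (ne_of_gt hpos)] at h2

lemma my_smul_le_abs (c : ℝ) (x : E) : c • x ≤ |c| • |x| := by
  rcases le_total 0 c with h | h
  · calc c • x ≤ c • |x| := smul_le_smul_of_nonneg_left (le_abs_self x) h
      _ = |c| • |x| := by rw [abs_of_nonneg h]
  · calc c • x = (-c) • (-x) := by rw [neg_smul_neg]
      _ ≤ (-c) • |x| := smul_le_smul_of_nonneg_left (neg_le_abs x) (neg_nonneg.2 h)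
      _ = |c| • |x| := by rw [abs_of_nonpos h]

lemma my_abs_smul_le (c : ℝ) (x : E) : |c • x| ≤ |c| • |x| := by
  refine abs_le'.2 ⟨my_smul_le_abs c x, ?_⟩
  rw [← neg_smul]
  simpa [abs_neg] using my_smul_le_abs (-c) x

/-- Riesz inequality: `(p+q) ⊓ r ≤ p ⊓ r + q ⊓ r` for positive elements. -/
lemma my_inf_add_le {p q r : E} (hp : 0 ≤ p) (hq : 0 ≤ q) (hr : 0 ≤ r) :
    (p + q) ⊓ r ≤ p ⊓ r + q ⊓ r := by
  have e1 : p ⊓ r + q ⊓ r = ((p + q) ⊓ (p + r)) ⊓ ((r + q) ⊓ (r + r)) := by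
    rw [inf_add, add_inf, add_inf]
  rw [e1]
  refine le_inf (le_inf inf_le_left ?_) (le_inf ?_ ?_)
  · exact le_trans inf_le_right (le_add_of_nonneg_left hp)
  · exact le_trans inf_le_right (le_add_of_nonneg_right hq)
  · exact le_trans inf_le_right (le_add_of_nonneg_right hr)

lemma my_disj_smul {a b : E} {c d : ℝ} (ha : 0 ≤ a) (hb : 0 ≤ b) (hc : 0 ≤ c) (hd : 0 ≤ d)
    (hab : a ⊓ b = 0) : c • a ⊓ d • b = 0 := by
  refine le_antisymm ?_ (le_inf (smul_nonneg hc ha) (smul_nonneg hd hb))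
  calc c • a ⊓ d • b ≤ (max c d) • a ⊓ (max c d) • b :=
        inf_le_inf (my_smul_mono_scalar (le_max_left c d) ha)
          (my_smul_mono_scalar (le_max_right c d) hb)
    _ = (max c d) • (a ⊓ b) := (my_smul_inf (le_trans hc (le_max_left c d)) a b).symm
    _ = 0 := by rw [hab, smul_zero]

lemma my_key_inf {m₁ m₂ a b : E} {c d : ℝ} (hm₁ : 0 ≤ m₁) (hm₂ : 0 ≤ m₂)
    (ha : 0 ≤ a) (hb : 0 ≤ b) (hc : 0 ≤ c) (hd : 0 ≤ d) (hab : a ⊓ b = 0) :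
    (m₁ + c • a) ⊓ (m₂ + d • b) ≤ m₁ + m₂ := by
  have h1 : m₁ + c • a ≤ (m₁ + m₂) + c • a :=
    add_le_add (le_add_of_nonneg_right hm₂) le_rfl
  have h2 : m₂ + d • b ≤ (m₁ + m₂) + d • b :=
    add_le_add (le_add_of_nonneg_left hm₁) le_rfl
  calc (m₁ + c • a) ⊓ (m₂ + d • b) ≤ ((m₁ + m₂) + c • a) ⊓ ((m₁ + m₂) + d • b) :=
        inf_le_inf h1 h2
    _ = (m₁ + m₂) + (c • a ⊓ d • b) := (add_inf _ _ _).symm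
    _ = m₁ + m₂ := by rw [my_disj_smul ha hb hc hd hab, add_zero]

/-- An ideal satisfying the disjointness splitting property is prime. -/
lemma my_prime_of_disjoint {Q : Submodule ℝ E}
    (hd : ∀ a b : E, 0 ≤ a → 0 ≤ b → a ⊓ b = 0 → a ∈ Q ∨ b ∈ Q) :
    ∀ x y : E, x ⊓ y ∈ Q → x ∈ Q ∨ y ∈ Q := by
  intro x y hxy
  have key : (x - x ⊓ y) ⊓ (y - x ⊓ y) = 0 := by rw [← inf_sub]; simp
  rcases hd _ _ (sub_nonneg.2 inf_le_left) (sub_nonneg.2 inf_le_right) key with hc | hc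
  · left; simpa using Q.add_mem hc hxy
  · right; simpa using Q.add_mem hc hxy

/-- The ideal generated by an ideal `M` and an element `a`. -/
def extId (M : Submodule ℝ E) (a : E) : Submodule ℝ E where
  carrier := {z | ∃ m : E, ∃ c : ℝ, m ∈ M ∧ 0 ≤ m ∧ 0 ≤ c ∧ |z| ≤ m + c • a}
  zero_mem' := ⟨0, 0, M.zero_mem, le_rfl, le_rfl, by simp⟩
  add_mem' := by
    rintro x y ⟨m₁, c₁, hm₁, hm₁0, hc₁, hle₁⟩ ⟨m₂, c₂, hm₂, hm₂0, hc₂, hle₂⟩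
    refine ⟨m₁ + m₂, c₁ + c₂, M.add_mem hm₁ hm₂, add_nonneg hm₁0 hm₂0,
      add_nonneg hc₁ hc₂, ?_⟩
    calc |x + y| ≤ |x| + |y| := abs_add_le x y
      _ ≤ (m₁ + c₁ • a) + (m₂ + c₂ • a) := add_le_add hle₁ hle₂
      _ = (m₁ + m₂) + (c₁ + c₂) • a := by rw [add_smul]; abel
  smul_mem' := by
    rintro r x ⟨m, c, hm, hm0, hc, hle⟩
    refine ⟨|r| • m, |r| * c, M.smul_mem _ hm, smul_nonneg (abs_nonneg r) hm0,
      mul_nonneg (abs_nonneg r) hc, ?_⟩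
    calc |r • x| ≤ |r| • |x| := my_abs_smul_le r x
      _ ≤ |r| • (m + c • a) := smul_le_smul_of_nonneg_left hle (abs_nonneg r)
      _ = |r| • m + (|r| * c) • a := by rw [smul_add, mul_smul]

lemma mem_extId {M : Submodule ℝ E} {a z : E} :
    z ∈ extId M a ↔ ∃ m : E, ∃ c : ℝ, m ∈ M ∧ 0 ≤ m ∧ 0 ≤ c ∧ |z| ≤ m + c • a :=
  Iff.rfl

lemma le_extId {M : Submodule ℝ E} (hM : IsIdeal M) (a : E) : M ≤ extId M a := by
  intro m hm
  exact ⟨|m|, 0, hM |m| m (by rw [abs_abs]) hm, abs_nonneg m, le_rfl, by simp⟩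

lemma self_mem_extId {M : Submodule ℝ E} {a : E} (ha : 0 ≤ a) : a ∈ extId M a :=
  ⟨0, 1, M.zero_mem, le_rfl, zero_le_one, by simp [abs_of_nonneg ha]⟩

lemma isIdeal_extId (M : Submodule ℝ E) (a : E) : IsIdeal (extId M a) := by
  rintro x y hxy ⟨m, c, hm, hm0, hc, hle⟩
  exact ⟨m, c, hm, hm0, hc, le_trans hxy hle⟩

end Helpers

section RelIdeal
variable {E : Type*} [Lattice E] [AddCommGroup E] [Module ℝ E]
  [CovariantClass E E (· + ·) (· ≤ ·)] [PosSMulMono ℝ E]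

/-- The "relative complement" ideal `{x | ∀ y ∈ P, |x| ⊓ |y| ∈ M}`. -/
def relIdeal (P M : Submodule ℝ E) (hM : IsIdeal M) : Submodule ℝ E where
  carrier := {x | ∀ y ∈ P, |x| ⊓ |y| ∈ M}
  zero_mem' := by
    intro y _
    rw [abs_zero, inf_eq_left.2 (abs_nonneg y)]
    exact M.zero_mem
  add_mem' := by
    intro x z hx hz y hy
    have h1 : |x + z| ⊓ |y| ≤ |x| ⊓ |y| + |z| ⊓ |y| :=
      le_trans (inf_le_inf_right _ (abs_add_le x z))
        (my_inf_add_le (abs_nonneg x) (abs_nonneg z) (abs_nonneg y))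
    refine hM _ _ ?_ (M.add_mem (hx y hy) (hz y hy))
    rw [abs_of_nonneg (le_inf (abs_nonneg (x + z)) (abs_nonneg y)),
      abs_of_nonneg (add_nonneg (le_inf (abs_nonneg x) (abs_nonneg y))
        (le_inf (abs_nonneg z) (abs_nonneg y)))]
    exact h1
  smul_mem' := by
    intro r x hx y hy
    have hcm0 : (0:ℝ) ≤ max |r| 1 := le_trans zero_le_one (le_max_right _ _)
    have h1 : |r • x| ⊓ |y| ≤ (max |r| 1) • (|x| ⊓ |y|) := by
      rw [my_smul_inf hcm0]
      refine inf_le_inf ?_ ?_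
      · exact le_trans (my_abs_smul_le r x)
          (my_smul_mono_scalar (le_max_left _ _) (abs_nonneg x))
      · calc |y| = (1:ℝ) • |y| := (one_smul ℝ _).symm
          _ ≤ (max |r| 1) • |y| := my_smul_mono_scalar (le_max_right _ _) (abs_nonneg y)
    refine hM _ _ ?_ (M.smul_mem (max |r| 1) (hx y hy))
    rw [abs_of_nonneg (le_inf (abs_nonneg (r • x)) (abs_nonneg y)),
      abs_of_nonneg (smul_nonneg hcm0 (le_inf (abs_nonneg x) (abs_nonneg y)))]
    exact h1

end RelIdeal

theorem statement4 (E : Type*) [Lattice E] [AddCommGroup E] [Module ℝ E]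
    [CovariantClass E E (· + ·) (· ≤ ·)] [PosSMulMono ℝ E]
    (h : ∀ P : Submodule ℝ E, IsPrimeIdeal P → IsPrincipalIdeal P) :
    ∀ I : Submodule ℝ E, IsIdeal I → I ≠ ⊤ → IsPrincipalIdeal I := by
  intro I hI hItop
  by_contra hIp
  obtain ⟨u, hu⟩ : ∃ u : E, u ∉ I := by
    by_contra hc; push_neg at hc
    exact hItop (Submodule.eq_top_iff'.2 hc)
  -- Step 1: a prime ideal `P` containing `I` and avoiding `u`, via Zorn.
  have hzorn1 : ∀ c ⊆ {J : Submodule ℝ E | IsIdeal J ∧ I ≤ J ∧ u ∉ J},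
      IsChain (· ≤ ·) c → ∀ y ∈ c,
      ∃ ub ∈ {J : Submodule ℝ E | IsIdeal J ∧ I ≤ J ∧ u ∉ J}, ∀ z ∈ c, z ≤ ub := by
    intro c hcS hchain y hy
    have hne : c.Nonempty := ⟨y, hy⟩
    have hdir := hchain.directedOn
    refine ⟨sSup c, ⟨?_, ?_, ?_⟩, fun z hz => le_sSup hz⟩
    · intro x y' hxy' hy'
      obtain ⟨J, hJ, hy'J⟩ := (Submodule.mem_sSup_of_directed hne hdir).1 hy'
      exact le_sSup hJ ((hcS hJ).1 x y' hxy' hy'J)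
    · exact le_trans (hcS hy).2.1 (le_sSup hy)
    · intro hus
      obtain ⟨J, hJ, huJ⟩ := (Submodule.mem_sSup_of_directed hne hdir).1 hus
      exact (hcS hJ).2.2 huJ
  obtain ⟨P, hIP, hPS1, hPmax⟩ :=
    zorn_le_nonempty₀ {J : Submodule ℝ E | IsIdeal J ∧ I ≤ J ∧ u ∉ J} hzorn1 I ⟨hI, le_rfl, hu⟩
  obtain ⟨hPid, hIP', hPu⟩ := hPS1
  have hPuniq : ∀ J : Submodule ℝ E, IsIdeal J → I ≤ J → u ∉ J → P ≤ J → J = P :=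
    fun J h1 h2 h3 h4 => le_antisymm (hPmax ⟨h1, h2, h3⟩ h4) h4
  have hPdisj : ∀ a b : E, 0 ≤ a → 0 ≤ b → a ⊓ b = 0 → a ∈ P ∨ b ∈ P := by
    intro a b ha hb hab
    by_contra hab'
    push_neg at hab'
    have hua : u ∈ extId P a := by
      by_contra hu'
      have heq := hPuniq (extId P a) (isIdeal_extId P a)
        (le_trans hIP (le_extId hPid a)) hu' (le_extId hPid a)
      exact hab'.1 (heq ▸ self_mem_extId ha)
    have hub : u ∈ extId P b := by
      by_contra hu'
      have heq := hPuniq (extId P b) (isIdeal_extId P b)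
        (le_trans hIP (le_extId hPid b)) hu' (le_extId hPid b)
      exact hab'.2 (heq ▸ self_mem_extId hb)
    obtain ⟨m₁, c, hm₁, hm₁0, hc, h1⟩ := hua
    obtain ⟨m₂, d, hm₂, hm₂0, hd, h2⟩ := hub
    have key : |u| ≤ m₁ + m₂ :=
      le_trans (le_inf h1 h2) (my_key_inf hm₁0 hm₂0 ha hb hc hd hab)
    refine hPu (hPid u (m₁ + m₂) ?_ (P.add_mem hm₁ hm₂))
    rwa [abs_of_nonneg (add_nonneg hm₁0 hm₂0)]
  have hPprime : IsPrimeIdeal P :=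
    ⟨hPid, fun hTop => hPu (hTop ▸ Submodule.mem_top), my_prime_of_disjoint hPdisj⟩
  obtain ⟨g, hg0, hgmem⟩ := h P hPprime
  -- Step 2: a maximal non-principal ideal `M` between `I` and `P`, via Zorn.
  have hzorn2 : ∀ c ⊆ {J : Submodule ℝ E | IsIdeal J ∧ I ≤ J ∧ J ≤ P ∧ ¬ IsPrincipalIdeal J},
      IsChain (· ≤ ·) c → ∀ y ∈ c,
      ∃ ub ∈ {J : Submodule ℝ E | IsIdeal J ∧ I ≤ J ∧ J ≤ P ∧ ¬ IsPrincipalIdeal J},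
        ∀ z ∈ c, z ≤ ub := by
    intro c hcS hchain y hy
    have hne : c.Nonempty := ⟨y, hy⟩
    have hdir := hchain.directedOn
    refine ⟨sSup c, ⟨?_, ?_, ?_, ?_⟩, fun z hz => le_sSup hz⟩
    · intro x y' hxy' hy'
      obtain ⟨J, hJ, hy'J⟩ := (Submodule.mem_sSup_of_directed hne hdir).1 hy'
      exact le_sSup hJ ((hcS hJ).1 x y' hxy' hy'J)
    · exact le_trans (hcS hy).2.1 (le_sSup hy)
    · exact sSup_le fun J hJ => (hcS hJ).2.2.1
    · rintro ⟨x, hx0, hxm⟩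
      have hxin : x ∈ sSup c := (hxm x).2 ⟨1, zero_le_one, by simp [abs_of_nonneg hx0]⟩
      obtain ⟨J, hJ, hxJ⟩ := (Submodule.mem_sSup_of_directed hne hdir).1 hxin
      refine (hcS hJ).2.2.2 ⟨x, hx0, fun y' => ⟨fun hy' => (hxm y').1 (le_sSup hJ hy'), ?_⟩⟩
      rintro ⟨cc, hcc, hyle⟩
      exact (hcS hJ).1 y' (cc • x) (by rwa [abs_of_nonneg (smul_nonneg hcc hx0)])
        (J.smul_mem _ hxJ)
  obtain ⟨M, hIM, hMS2, hMmax⟩ :=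
    zorn_le_nonempty₀ {J : Submodule ℝ E | IsIdeal J ∧ I ≤ J ∧ J ≤ P ∧ ¬ IsPrincipalIdeal J}
      hzorn2 I ⟨hI, le_rfl, hIP, hIp⟩
  obtain ⟨hMid, hIM', hMP, hMnp⟩ := hMS2
  have hMuniq : ∀ J : Submodule ℝ E, IsIdeal J → I ≤ J → J ≤ P → ¬ IsPrincipalIdeal J →
      M ≤ J → J = M :=
    fun J h1 h2 h3 h4 h5 => le_antisymm (hMmax ⟨h1, h2, h3, h4⟩ h5) h5
  have hgP : g ∈ P := (hgmem g).2 ⟨1, zero_le_one, by simp [abs_of_nonneg hg0]⟩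
  have hgM : g ∉ M := by
    intro hgM
    refine hMnp ⟨g, hg0, fun y => ⟨fun hy => (hgmem y).1 (hMP hy), ?_⟩⟩
    rintro ⟨c, hc, hyle⟩
    exact hMid y (c • g) (by rwa [abs_of_nonneg (smul_nonneg hc hg0)]) (M.smul_mem c hgM)
  -- Step 3: `M` splits disjoint positive pairs inside `P` (Cohen-type argument).
  have hrel : ∀ a b : E, a ∈ P → b ∈ P → 0 ≤ a → 0 ≤ b → a ⊓ b = 0 → a ∈ M ∨ b ∈ M := by
    intro a b haP hbP ha hb hab
    by_contra hab'
    push_neg at hab'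
    have hexta : extId M a ≤ P := by
      rintro z ⟨m, c, hm, hm0, hc, hle⟩
      refine hPid z (m + c • a) ?_ (P.add_mem (hMP hm) (P.smul_mem c haP))
      rwa [abs_of_nonneg (add_nonneg hm0 (smul_nonneg hc ha))]
    have hextb : extId M b ≤ P := by
      rintro z ⟨m, c, hm, hm0, hc, hle⟩
      refine hPid z (m + c • b) ?_ (P.add_mem (hMP hm) (P.smul_mem c hbP))
      rwa [abs_of_nonneg (add_nonneg hm0 (smul_nonneg hc hb))]
    have hpa : IsPrincipalIdeal (extId M a) := by
      by_contra hnp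
      have heq := hMuniq (extId M a) (isIdeal_extId M a)
        (le_trans hIM' (le_extId hMid a)) hexta hnp (le_extId hMid a)
      exact hab'.1 (heq ▸ self_mem_extId ha)
    have hpb : IsPrincipalIdeal (extId M b) := by
      by_contra hnp
      have heq := hMuniq (extId M b) (isIdeal_extId M b)
        (le_trans hIM' (le_extId hMid b)) hextb hnp (le_extId hMid b)
      exact hab'.2 (heq ▸ self_mem_extId hb)
    obtain ⟨α, hα0, hαmem⟩ := hpa
    obtain ⟨β, hβ0, hβmem⟩ := hpb
    have hαe : α ∈ extId M a := (hαmem α).2 ⟨1, zero_le_one, by simp [abs_of_nonneg hα0]⟩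
    have hβe : β ∈ extId M b := (hβmem β).2 ⟨1, zero_le_one, by simp [abs_of_nonneg hβ0]⟩
    obtain ⟨m₁, c₁, hm₁, hm₁0, hc₁, hle₁⟩ := hαe
    obtain ⟨m₂, c₂, hm₂, hm₂0, hc₂, hle₂⟩ := hβe
    rw [abs_of_nonneg hα0] at hle₁
    rw [abs_of_nonneg hβ0] at hle₂
    have hinf0 : (0:E) ≤ α ⊓ β := le_inf hα0 hβ0
    have hinfM : α ⊓ β ∈ M := by
      have hle : α ⊓ β ≤ m₁ + m₂ :=
        le_trans (inf_le_inf hle₁ hle₂) (my_key_inf hm₁0 hm₂0 ha hb hc₁ hc₂ hab)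
      refine hMid _ (m₁ + m₂) ?_ (M.add_mem hm₁ hm₂)
      rwa [abs_of_nonneg hinf0, abs_of_nonneg (add_nonneg hm₁0 hm₂0)]
    refine hMnp ⟨α ⊓ β, hinf0, fun y => ⟨?_, ?_⟩⟩
    · intro hy
      obtain ⟨cα, hcα, hyα⟩ := (hαmem y).1 (le_extId hMid a hy)
      obtain ⟨cβ, hcβ, hyβ⟩ := (hβmem y).1 (le_extId hMid b hy)
      refine ⟨max cα cβ, le_trans hcα (le_max_left _ _), ?_⟩
      rw [my_smul_inf (le_trans hcα (le_max_left _ _))]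
      exact le_inf (le_trans hyα (my_smul_mono_scalar (le_max_left _ _) hα0))
        (le_trans hyβ (my_smul_mono_scalar (le_max_right _ _) hβ0))
    · rintro ⟨cc, hcc, hyle⟩
      exact hMid y (cc • (α ⊓ β)) (by rwa [abs_of_nonneg (smul_nonneg hcc hinf0)])
        (M.smul_mem cc hinfM)
  -- Step 4: the ideal `Mt = {x | ∀ y ∈ P, |x| ⊓ |y| ∈ M}` is prime, hence principal.
  set Mt := relIdeal P M hMid with hMtdef
  have hMtmem : ∀ z : E, z ∈ Mt ↔ ∀ y ∈ P, |z| ⊓ |y| ∈ M := fun z => Iff.rfl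
  have hMMt : M ≤ Mt := by
    intro m hm
    rw [hMtmem]
    intro y hy
    refine hMid _ m ?_ hm
    rw [abs_of_nonneg (le_inf (abs_nonneg m) (abs_nonneg y))]
    exact inf_le_left
  have hMtid : IsIdeal Mt := by
    intro x z hxz hz
    rw [hMtmem] at hz ⊢
    intro y hy
    refine hMid _ _ ?_ (hz y hy)
    rw [abs_of_nonneg (le_inf (abs_nonneg x) (abs_nonneg y)),
      abs_of_nonneg (le_inf (abs_nonneg z) (abs_nonneg y))]
    exact inf_le_inf_right _ hxz
  have hgMt : g ∉ Mt := by
    intro hg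
    have h1 := (hMtmem g).1 hg g hgP
    rw [abs_of_nonneg hg0, inf_idem] at h1
    exact hgM h1
  have hMtdisj : ∀ a b : E, 0 ≤ a → 0 ≤ b → a ⊓ b = 0 → a ∈ Mt ∨ b ∈ Mt := by
    intro a b ha hb hab
    by_contra hab'
    push_neg at hab'
    obtain ⟨y₁, hy₁P, hy₁⟩ : ∃ y ∈ P, |a| ⊓ |y| ∉ M := by
      by_contra hc; push_neg at hc
      exact hab'.1 ((hMtmem a).2 hc)
    obtain ⟨y₂, hy₂P, hy₂⟩ : ∃ y ∈ P, |b| ⊓ |y| ∉ M := by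
      by_contra hc; push_neg at hc
      exact hab'.2 ((hMtmem b).2 hc)
    have h1P : |a| ⊓ |y₁| ∈ P := by
      refine hPid _ y₁ ?_ hy₁P
      rw [abs_of_nonneg (le_inf (abs_nonneg a) (abs_nonneg y₁))]
      exact inf_le_right
    have h2P : |b| ⊓ |y₂| ∈ P := by
      refine hPid _ y₂ ?_ hy₂P
      rw [abs_of_nonneg (le_inf (abs_nonneg b) (abs_nonneg y₂))]
      exact inf_le_right
    have hdisj : (|a| ⊓ |y₁|) ⊓ (|b| ⊓ |y₂|) = 0 := by
      refine le_antisymm ?_ (le_inf (le_inf (abs_nonneg a) (abs_nonneg y₁))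
        (le_inf (abs_nonneg b) (abs_nonneg y₂)))
      calc (|a| ⊓ |y₁|) ⊓ (|b| ⊓ |y₂|) ≤ |a| ⊓ |b| := inf_le_inf inf_le_left inf_le_left
        _ = a ⊓ b := by rw [abs_of_nonneg ha, abs_of_nonneg hb]
        _ = 0 := hab
    rcases hrel _ _ h1P h2P (le_inf (abs_nonneg a) (abs_nonneg y₁))
      (le_inf (abs_nonneg b) (abs_nonneg y₂)) hdisj with hc | hc
    · exact hy₁ hc
    · exact hy₂ hc
  have hMtprime : IsPrimeIdeal Mt :=
    ⟨hMtid, fun hTop => hgMt (hTop ▸ Submodule.mem_top), my_prime_of_disjoint hMtdisj⟩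
  obtain ⟨w, hw0, hwmem⟩ := h Mt hMtprime
  -- Step 5: then `M` is principal with generator `w ⊓ g`: contradiction.
  refine hMnp ⟨w ⊓ g, le_inf hw0 hg0, fun y => ⟨?_, ?_⟩⟩
  · intro hy
    obtain ⟨cw, hcw, hyw⟩ := (hwmem y).1 (hMMt hy)
    obtain ⟨cg, hcg, hyg⟩ := (hgmem y).1 (hMP hy)
    refine ⟨max cw cg, le_trans hcw (le_max_left _ _), ?_⟩
    rw [my_smul_inf (le_trans hcw (le_max_left _ _))]
    exact le_inf (le_trans hyw (my_smul_mono_scalar (le_max_left _ _) hw0))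
      (le_trans hyg (my_smul_mono_scalar (le_max_right _ _) hg0))
  · rintro ⟨cc, hcc, hyle⟩
    have hyMt : y ∈ Mt := (hwmem y).2
      ⟨cc, hcc, le_trans hyle (smul_le_smul_of_nonneg_left inf_le_left hcc)⟩
    have hyP : y ∈ P := (hgmem y).2
      ⟨cc, hcc, le_trans hyle (smul_le_smul_of_nonneg_left inf_le_right hcc)⟩
    have hyM : |y| ∈ M := by
      have h1 := (hMtmem y).1 hyMt y hyP
      rwa [inf_idem] at h1
    exact hMid y |y| (by rw [abs_abs]) hyM
end
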